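/- arXiv:2510.22882 — 2 statements merged into one kernel-verified Lean document; each statement's English description precedes it below -/
import Mathlib

section
/- Termination criterion is sound: if at some state the maximum left boundary satisfies max_t ℓ_t ≤ min_t r_t, then for every pair s, t and every a < i_s, L_s[a] ≤ r_t; consequently no further transfer can be required and the vector i is a valid multi-way co-rank. -/
open scoped BigOperators Classical

/-- Left boundary value `ℓ_t` of the cut: `L_t[i_t - 1]` if `i_t > 0`, else `⊥` (−∞). -/
noncomputable def lcut {m : ℕ} (n : Fin m → ℕ) (L : ∀ t, Fin (n t) → ℝ)
    (i : Fin m → ℕ) (t : Fin m) : EReal :=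
  if h : 0 < i t ∧ i t ≤ n t then ((L t ⟨i t - 1, by omega⟩ : ℝ) : EReal) else ⊥

/-- Right boundary value `r_t` of the cut: `L_t[i_t]` if `i_t < n_t`, else `⊤` (+∞). -/
noncomputable def rcut {m : ℕ} (n : Fin m → ℕ) (L : ∀ t, Fin (n t) → ℝ)
    (i : Fin m → ℕ) (t : Fin m) : EReal :=
  if h : i t < n t then ((L t ⟨i t, h⟩ : ℝ) : EReal) else ⊤

/-!
Every prefix element of `L_s` is at most `ℓ_s` by monotonicity, hence at most `max ℓ`, hence
at most `min r ≤ r_t`; and `r_t` is at most every suffix element of `L_t`, again by monotonicity.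
-/

section Cut

variable {m : ℕ} {n : Fin m → ℕ} {L : ∀ t, Fin (n t) → ℝ} {i : Fin m → ℕ}

theorem coe_le_lcut_of_lt {s : Fin m} (hmono : Monotone (L s)) (hle : i s ≤ n s)
    {a : Fin (n s)} (ha : (a : ℕ) < i s) : ((L s a : ℝ) : EReal) ≤ lcut n L i s := by
  rw [lcut, dif_pos ⟨by omega, hle⟩]
  exact EReal.coe_le_coe_iff.mpr (hmono (Fin.le_def.mpr (by dsimp only; omega)))

theorem rcut_le_coe_of_le {t : Fin m} (hmono : Monotone (L t))
    {b : Fin (n t)} (hb : i t ≤ (b : ℕ)) : rcut n L i t ≤ ((L t b : ℝ) : EReal) := by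
  have hlt : i t < n t := hb.trans_lt b.isLt
  rw [rcut, dif_pos hlt]
  exact EReal.coe_le_coe_iff.mpr (hmono (Fin.le_def.mpr hb))

theorem lcut_le_rcut_of_iSup_le_iInf
    (hstop : (⨆ t, lcut n L i t) ≤ ⨅ t, rcut n L i t) (s t : Fin m) :
    lcut n L i s ≤ rcut n L i t :=
  (le_iSup _ s).trans (hstop.trans (iInf_le _ t))

end Cut

theorem termination_criterion_sound_general {m : ℕ} (n : Fin m → ℕ) (L : ∀ t, Fin (n t) → ℝ)
    (hmono : ∀ t, Monotone (L t)) (i : Fin m → ℕ)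
    (hle : ∀ t, i t ≤ n t)
    (hstop : (⨆ t, lcut n L i t) ≤ ⨅ t, rcut n L i t) :
    (∀ (s t : Fin m) (a : Fin (n s)), (a : ℕ) < i s →
        ((L s a : ℝ) : EReal) ≤ rcut n L i t) ∧
    (∀ (s t : Fin m) (a : Fin (n s)) (b : Fin (n t)),
        (a : ℕ) < i s → i t ≤ (b : ℕ) → L s a ≤ L t b) := by
  have prefix_le_rcut : ∀ (s t : Fin m) (a : Fin (n s)), (a : ℕ) < i s →
      ((L s a : ℝ) : EReal) ≤ rcut n L i t := fun s t _ ha =>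
    (coe_le_lcut_of_lt (hmono s) (hle s) ha).trans (lcut_le_rcut_of_iSup_le_iInf hstop s t)
  refine ⟨prefix_le_rcut, fun s t a b ha hb => ?_⟩
  exact EReal.coe_le_coe_iff.mp
    ((prefix_le_rcut s t a ha).trans (rcut_le_coe_of_le (hmono t) hb))

/-- the termination criterion is sound: if `max ℓ ≤ min r`, then
every prefix element is ≤ every right boundary, so `i` is a valid co-rank
(every prefix element is ≤ every suffix element). -/
theorem termination_criterion_sound {m : ℕ} (n : Fin m → ℕ) (L : ∀ t, Fin (n t) → ℝ)
    (hmono : ∀ t, Monotone (L t)) (K : ℕ) (i : Fin m → ℕ)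
    (hle : ∀ t, i t ≤ n t) (hsum : ∑ t, i t = K)
    (hstop : (⨆ t, lcut n L i t) ≤ ⨅ t, rcut n L i t) :
    (∀ (s t : Fin m) (a : Fin (n s)), (a : ℕ) < i s →
        ((L s a : ℝ) : EReal) ≤ rcut n L i t) ∧
    (∀ (s t : Fin m) (a : Fin (n s)) (b : Fin (n t)),
        (a : ℕ) < i s → i t ≤ (b : ℕ) → L s a ≤ L t b) :=
  termination_criterion_sound_general n L hmono i hle hstop
end

section
/- Degenerate case impossibility: if the co-rank condition fails (max_t ℓ_t > min_t r_t) with donor p = argmax ℓ and receiver q = argmin r, and the invariants L_b[t] ≤ i_t ≤ U_b[t] hold with the additional invariant that any index vector j with L_b ≤ j ≤ U_b and Σ j = K co-ranking-valid satisfies j_p ≤ i_p and j_q ≥ i_q whenever bounds were tightened consistently, then Δ = min(⌈(i_p − L_b[p])/2⌉, ⌈(U_b[q] − i_q)/2⌉) ≥ 1, i.e., both i_p > L_b[p] and U_b[q] > i_q. -/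
open scoped BigOperators Classical

/-!
Let `j` be the valid co-rank vector inside the bounds. Because all keys are distinct, validity
of `j` is strict: every left boundary value of `j` lies below every right boundary value.
If `i_p ≤ L_b[p] ≤ j_p`, then any `t` with `j_t < i_t` would give
`r_t(j) ≤ ℓ_t(i) ≤ ℓ_p(i) ≤ ℓ_p(j) < r_t(j)`; so `i ≤ j` pointwise, and equal sums force `i = j`,
contradicting the failure of co-ranking at `i`. The receiver side is symmetric.
-/

open Finset

theorem eq_of_forall_le_of_sum_eq {ι M : Type*} [Fintype ι] [AddCommMonoid M] [PartialOrder M]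
    [IsOrderedCancelAddMonoid M] {f g : ι → M} (hle : ∀ t, f t ≤ g t)
    (hsum : ∑ t, f t = ∑ t, g t) : f = g :=
  funext fun t => (sum_eq_sum_iff_of_le fun t _ => hle t).mp hsum t (mem_univ t)

section Cut

variable {m : ℕ} {n : Fin m → ℕ} {L : ∀ t, Fin (n t) → ℝ} {i j : Fin m → ℕ}

theorem lcut_of_pos {t : Fin m} (hpos : 0 < i t) (hle : i t ≤ n t) :
    lcut n L i t = (L t ⟨i t - 1, by omega⟩ : EReal) :=
  dif_pos ⟨hpos, hle⟩

theorem rcut_of_lt {t : Fin m} (hlt : i t < n t) : rcut n L i t = (L t ⟨i t, hlt⟩ : EReal) :=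
  dif_pos hlt

theorem lcut_mono (hmono : ∀ t, Monotone (L t)) {t : Fin m} (hij : i t ≤ j t) (hjn : j t ≤ n t) :
    lcut n L i t ≤ lcut n L j t := by
  by_cases hi : 0 < i t
  · rw [lcut_of_pos hi (hij.trans hjn), lcut_of_pos (hi.trans_le hij) hjn, EReal.coe_le_coe_iff]
    exact hmono t (Fin.mk_le_mk.mpr (by omega))
  · simp [lcut, hi]

theorem rcut_mono (hmono : ∀ t, Monotone (L t)) {t : Fin m} (hij : i t ≤ j t) :
    rcut n L i t ≤ rcut n L j t := by
  by_cases hj : j t < n t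
  · rw [rcut_of_lt (hij.trans_lt hj), rcut_of_lt hj, EReal.coe_le_coe_iff]
    exact hmono t (Fin.mk_le_mk.mpr hij)
  · simp [rcut, hj]

theorem rcut_le_lcut (hmono : ∀ t, Monotone (L t)) {t : Fin m} (hji : j t < i t)
    (hin : i t ≤ n t) : rcut n L j t ≤ lcut n L i t := by
  rw [rcut_of_lt (hji.trans_le hin), lcut_of_pos (by omega) hin, EReal.coe_le_coe_iff]
  exact hmono t (Fin.mk_le_mk.mpr (by omega))

/-- Left values are `⊥` or keys, right values are `⊤` or keys, and the two keys would sit at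
different positions. -/
theorem lcut_ne_rcut (hinj : Function.Injective (fun x : Σ t : Fin m, Fin (n t) => L x.1 x.2))
    (a b : Fin m) : lcut n L j a ≠ rcut n L j b := by
  unfold lcut rcut
  split_ifs with ha hb
  · intro h
    obtain ⟨rfl, hpos⟩ := Sigma.mk.inj_iff.mp (hinj (EReal.coe_eq_coe_iff.mp h))
    have := Fin.mk.inj_iff.mp (eq_of_heq hpos)
    omega
  all_goals simp

theorem lcut_lt_rcut_of_iSup_le_iInf
    (hinj : Function.Injective (fun x : Σ t : Fin m, Fin (n t) => L x.1 x.2))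
    (hj : (⨆ t, lcut n L j t) ≤ ⨅ t, rcut n L j t) (a b : Fin m) :
    lcut n L j a < rcut n L j b :=
  (((le_iSup _ a).trans hj).trans (iInf_le _ b)).lt_of_ne (lcut_ne_rcut hinj a b)

variable (hmono : ∀ t, Monotone (L t))
  (hinj : Function.Injective (fun x : Σ t : Fin m, Fin (n t) => L x.1 x.2))
  (hj : (⨆ t, lcut n L j t) ≤ ⨅ t, rcut n L j t)
include hmono hinj hj

theorem le_of_le_at_lcut_max {p : Fin m} (hpmax : ∀ t, lcut n L i t ≤ lcut n L i p)
    (hin : ∀ t, i t ≤ n t) (hjn : j p ≤ n p) (hip : i p ≤ j p) (t : Fin m) : i t ≤ j t := by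
  by_contra! hji
  have := calc rcut n L j t ≤ lcut n L i t := rcut_le_lcut hmono hji (hin t)
    _ ≤ lcut n L i p := hpmax t
    _ ≤ lcut n L j p := lcut_mono hmono hip hjn
    _ < rcut n L j t := lcut_lt_rcut_of_iSup_le_iInf hinj hj p t
  exact this.false

theorem le_of_le_at_rcut_min {q : Fin m} (hqmin : ∀ t, rcut n L i q ≤ rcut n L i t)
    (hjn : ∀ t, j t ≤ n t) (hjq : j q ≤ i q) (t : Fin m) : j t ≤ i t := by
  by_contra! hij
  have := calc lcut n L j t < rcut n L j q := lcut_lt_rcut_of_iSup_le_iInf hinj hj t q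
    _ ≤ rcut n L i q := rcut_mono hmono hjq
    _ ≤ rcut n L i t := hqmin t
    _ ≤ lcut n L j t := rcut_le_lcut hmono hij (hjn t)
  exact this.false

end Cut

/-- degenerate case impossibility: if the co-rank condition fails at
the extremal donor/receiver pair and a valid co-rank vector lies within the bounds,
then `i_p > L_b[p]`, `i_q < U_b[q]`, hence `Δ ≥ 1`. -/
theorem degenerate_case_impossible {m : ℕ} (n : Fin m → ℕ) (L : ∀ t, Fin (n t) → ℝ)
    (hmono : ∀ t, Monotone (L t))
    (hinj : Function.Injective (fun x : Σ t : Fin m, Fin (n t) => L x.1 x.2))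
    (K : ℕ) (Lb i Ub : Fin m → ℕ)
    (hinv : ∀ t, Lb t ≤ i t ∧ i t ≤ Ub t ∧ Ub t ≤ n t)
    (hsum : ∑ t, i t = K)
    (p q : Fin m)
    (hpmax : ∀ t, lcut n L i t ≤ lcut n L i p)
    (hqmin : ∀ t, rcut n L i q ≤ rcut n L i t)
    (hp : 0 < i p) (hq : i q < n q)
    (hviol : L q ⟨i q, hq⟩ < L p ⟨i p - 1, by have := (hinv p).2; omega⟩)
    (hwitness : ∃ j : Fin m → ℕ, (∀ t, Lb t ≤ j t ∧ j t ≤ Ub t) ∧ (∑ t, j t = K) ∧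
        (⨆ t, lcut n L j t) ≤ ⨅ t, rcut n L j t) :
    Lb p < i p ∧ i q < Ub q ∧
      1 ≤ min ((i p - Lb p + 1) / 2) ((Ub q - i q + 1) / 2) := by
  obtain ⟨j, hjb, hjsum, hj⟩ := hwitness
  have hin : ∀ t, i t ≤ n t := fun t => (hinv t).2.1.trans (hinv t).2.2
  have hjn : ∀ t, j t ≤ n t := fun t => (hjb t).2.trans (hinv t).2.2
  have hij : i ≠ j := by
    rintro rfl
    have := lcut_lt_rcut_of_iSup_le_iInf hinj hj p q
    rw [lcut_of_pos hp (hin p), rcut_of_lt hq, EReal.coe_lt_coe_iff] at this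
    exact this.not_gt hviol
  have hLb : Lb p < i p := by
    by_contra! hip
    exact hij <| eq_of_forall_le_of_sum_eq
      (le_of_le_at_lcut_max hmono hinj hj hpmax hin (hjn p) (hip.trans (hjb p).1))
      (hsum.trans hjsum.symm)
  have hUb : i q < Ub q := by
    by_contra! hiq
    exact hij <| (eq_of_forall_le_of_sum_eq
      (le_of_le_at_rcut_min hmono hinj hj hqmin hjn ((hjb q).2.trans hiq))
      (hjsum.trans hsum.symm)).symm
  exact ⟨hLb, hUb, by omega⟩
end
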